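/- arXiv:2107.09025 — 8 statements merged into one kernel-verified Lean document; each statement's English description precedes it below -/
import Mathlib

section
/- The set L = {2n-1, 2n, ..., 4n-2} ∪ {6n-3} of positive integers, for n ≥ 1, induces as its sum graph the disjoint union of a perfect matching on 2n vertices (n disjoint edges) together with one isolated vertex. That is, in the graph on vertex set L where u and v are adjacent iff u+v ∈ L, each label a ∈ [2n-1, 4n-2] is adjacent exactly to 6n-3-a, and 6n-3 is isolated. -/
/-- The sum graph induced by a finite set `L` of integers: vertices are the elements of `L`,
with distinct `u, v` adjacent iff `u + v ∈ L`. -/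
def sumGraph (L : Finset ℤ) : SimpleGraph {x : ℤ // x ∈ L} :=
  SimpleGraph.fromRel (fun a b => (a : ℤ) + b ∈ L)

/-- `L` induces the graph `G` together with some isolated vertices:
there is an injective labeling `f` of the vertices of `G` by elements of `L` such that
adjacency in `G` corresponds exactly to the sum condition, and every label not used
for a vertex of `G` is isolated in the induced sum graph. -/
def IsSumLabeling {V : Type*} (G : SimpleGraph V) (L : Finset ℤ) : Prop :=
  ∃ f : V → ℤ, Function.Injective f ∧ (∀ v, f v ∈ L) ∧
    (∀ u v : V, G.Adj u v ↔ (f u ≠ f v ∧ f u + f v ∈ L)) ∧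
    (∀ a ∈ L, a ∉ Set.range f → ∀ b ∈ L, b ≠ a → a + b ∉ L)

/-- The sum-diameter of `G`: the minimum of `max L - min L` over finite sets `L` of
positive integers whose induced sum graph is `G` plus isolated vertices. -/
noncomputable def sumDiam {V : Type*} (G : SimpleGraph V) : ℕ :=
  sInf {d | ∃ L : Finset ℤ, (∀ x ∈ L, 0 < x) ∧ IsSumLabeling G L ∧
    ∃ hL : L.Nonempty, (L.max' hL - L.min' hL).toNat = d}

/-- The integral sum-diameter of `G`: labels may be arbitrary integers. -/
noncomputable def intSumDiam {V : Type*} (G : SimpleGraph V) : ℕ :=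
  sInf {d | ∃ L : Finset ℤ, IsSumLabeling G L ∧
    ∃ hL : L.Nonempty, (L.max' hL - L.min' hL).toNat = d}

/-- The sum number `σ(G)`: minimum number of isolated vertices that must be added to `G`
to obtain a sum graph. -/
noncomputable def sumNumber {V : Type*} [Fintype V] (G : SimpleGraph V) : ℕ :=
  sInf {k | ∃ L : Finset ℤ, (∀ x ∈ L, 0 < x) ∧ IsSumLabeling G L ∧
    L.card = Fintype.card V + k}

/-- The spum of `G`: minimum range over labelings using exactly `σ(G)` extra isolated
vertices. -/
noncomputable def spum {V : Type*} [Fintype V] (G : SimpleGraph V) : ℕ :=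
  sInf {d | ∃ L : Finset ℤ, (∀ x ∈ L, 0 < x) ∧ IsSumLabeling G L ∧
    L.card = Fintype.card V + sumNumber G ∧
    ∃ hL : L.Nonempty, (L.max' hL - L.min' hL).toNat = d}

/-- The perfect matching `nK₂`: `n` disjoint edges on `2n` vertices. -/
def matching (n : ℕ) : SimpleGraph (Fin n × Fin 2) :=
  SimpleGraph.fromRel (fun a b => a.1 = b.1)

/-! The labels below `6n - 3` come in pairs `a, 6n - 3 - a`. Two distinct labels of
`[2n - 1, 4n - 2]` sum to at least `4n - 1`, beyond the interval, so their sum lies in `L` only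
when it is `6n - 3`; and adding `6n - 3` to any other label overshoots every label. -/

open Finset

noncomputable def matchingLabels (n : ℕ) : Finset ℤ :=
  Icc (2 * (n : ℤ) - 1) (4 * (n : ℤ) - 2) ∪ {6 * (n : ℤ) - 3}

section matchingLabels

variable {n : ℕ}

theorem mem_matchingLabels {x : ℤ} :
    x ∈ matchingLabels n ↔
      (2 * (n : ℤ) - 1 ≤ x ∧ x ≤ 4 * (n : ℤ) - 2) ∨ x = 6 * (n : ℤ) - 3 := by
  simp [matchingLabels, or_comm]

theorem ne_and_add_mem_matchingLabels_iff {a b : ℤ} (ha : a ∈ matchingLabels n)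
    (hb : b ∈ matchingLabels n) :
    a ≠ b ∧ a + b ∈ matchingLabels n ↔ a + b = 6 * (n : ℤ) - 3 := by
  rw [mem_matchingLabels] at ha hb ⊢
  omega

theorem six_mul_sub_three_add_notMem_matchingLabels {b : ℤ} (hb : b ∈ matchingLabels n)
    (hne : b ≠ 6 * (n : ℤ) - 3) : 6 * (n : ℤ) - 3 + b ∉ matchingLabels n := by
  rw [mem_matchingLabels] at hb ⊢
  omega

end matchingLabels

def matchingLabel (n : ℕ) (v : Fin n × Fin 2) : ℤ :=
  if v.2 = 0 then 2 * (n : ℤ) - 1 + v.1 else 4 * (n : ℤ) - 2 - v.1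

section matchingLabel

variable {n : ℕ}

theorem matchingLabel_mem_Icc (v : Fin n × Fin 2) :
    matchingLabel n v ∈ Icc (2 * (n : ℤ) - 1) (4 * (n : ℤ) - 2) := by
  obtain ⟨i, j⟩ := v
  have := i.isLt
  fin_cases j <;>
    simp only [matchingLabel, Fin.isValue, Fin.zero_eta, Fin.mk_one, one_ne_zero, ↓reduceIte,
      mem_Icc] <;> omega

theorem matchingLabel_injective : Function.Injective (matchingLabel n) := by
  rintro ⟨i, j⟩ ⟨i', j'⟩ h
  have := i.isLt
  have := i'.isLt
  fin_cases j <;> fin_cases j' <;>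
    simp only [matchingLabel, Fin.isValue, Fin.zero_eta, Fin.mk_one, one_ne_zero, ↓reduceIte,
      Prod.mk.injEq, Fin.ext_iff, and_true] at h ⊢ <;> omega

theorem matchingLabel_add_eq_iff {u v : Fin n × Fin 2} :
    matchingLabel n u + matchingLabel n v = 6 * (n : ℤ) - 3 ↔ u.1 = v.1 ∧ u.2 ≠ v.2 := by
  obtain ⟨⟨i, hi⟩, j⟩ := u
  obtain ⟨⟨i', hi'⟩, j'⟩ := v
  fin_cases j <;> fin_cases j' <;>
    simp only [matchingLabel, Fin.isValue, Fin.zero_eta, Fin.mk_one, one_ne_zero, zero_ne_one,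
      ↓reduceIte, Fin.mk.injEq, ne_eq, not_true_eq_false, not_false_eq_true, and_true, and_false,
      iff_false] <;> omega

theorem Icc_subset_range_matchingLabel :
    (Icc (2 * (n : ℤ) - 1) (4 * (n : ℤ) - 2) : Set ℤ) ⊆ Set.range (matchingLabel n) := by
  intro a ha
  rw [coe_Icc, Set.mem_Icc] at ha
  by_cases hlow : a ≤ 3 * (n : ℤ) - 2
  · refine ⟨(⟨(a - (2 * n - 1)).toNat, by omega⟩, 0), ?_⟩
    simp only [matchingLabel, Fin.isValue, ↓reduceIte]
    omega
  · refine ⟨(⟨(4 * n - 2 - a).toNat, by omega⟩, 1), ?_⟩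
    simp only [matchingLabel, Fin.isValue, one_ne_zero, ↓reduceIte]
    omega

theorem matching_adj_iff {u v : Fin n × Fin 2} :
    (matching n).Adj u v ↔ u.1 = v.1 ∧ u.2 ≠ v.2 := by
  simp only [matching, SimpleGraph.fromRel_adj, ne_eq, Prod.ext_iff]
  grind

theorem isSumLabeling_matching : IsSumLabeling (matching n) (matchingLabels n) := by
  have mem_of_Icc {a : ℤ} (ha : a ∈ Icc (2 * (n : ℤ) - 1) (4 * (n : ℤ) - 2)) :
      a ∈ matchingLabels n :=
    mem_union_left _ ha
  refine ⟨matchingLabel n, matchingLabel_injective,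
    fun v => mem_of_Icc (matchingLabel_mem_Icc v), fun u v => ?_, ?_⟩
  · rw [ne_and_add_mem_matchingLabels_iff (mem_of_Icc (matchingLabel_mem_Icc u))
      (mem_of_Icc (matchingLabel_mem_Icc v)), matching_adj_iff, matchingLabel_add_eq_iff]
  · intro a ha hrange b hb hba
    have ha' : a = 6 * (n : ℤ) - 3 := by
      rcases mem_union.1 ha with hIcc | hsing
      · exact absurd (Icc_subset_range_matchingLabel hIcc) hrange
      · exact mem_singleton.1 hsing
    subst ha'
    exact six_mul_sub_three_add_notMem_matchingLabels hb hba

end matchingLabel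

theorem stmt0_general (n : ℕ) :
    let L : Finset ℤ := Finset.Icc (2 * (n : ℤ) - 1) (4 * (n : ℤ) - 2) ∪ {6 * (n : ℤ) - 3}
    IsSumLabeling (matching n) L ∧
    (∀ a ∈ Finset.Icc (2 * (n : ℤ) - 1) (4 * (n : ℤ) - 2),
      (6 * (n : ℤ) - 3 - a ∈ L) ∧
      (∀ b ∈ L, (b ≠ a ∧ a + b ∈ L) ↔ b = 6 * (n : ℤ) - 3 - a)) ∧
    (∀ b ∈ L, b ≠ 6 * (n : ℤ) - 3 → 6 * (n : ℤ) - 3 + b ∉ L) := by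
  intro L
  refine ⟨isSumLabeling_matching, fun a ha => ⟨?_, fun b hb => ?_⟩,
    fun b hb => six_mul_sub_three_add_notMem_matchingLabels hb⟩
  · rw [mem_Icc] at ha
    exact mem_matchingLabels.2 (by omega)
  · rw [ne_comm]
    exact (ne_and_add_mem_matchingLabels_iff (mem_union_left _ ha) hb).trans (by omega)

/-- For `n ≥ 1`, `L = [2n-1, 4n-2] ∪ {6n-3}` induces the perfect matching `nK₂` plus one
isolated vertex: each `a ∈ [2n-1, 4n-2]` is adjacent exactly to `6n-3-a`, and `6n-3` is
isolated. -/
theorem stmt0 (n : ℕ) (hn : 1 ≤ n) :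
    let L : Finset ℤ := Finset.Icc (2 * (n : ℤ) - 1) (4 * (n : ℤ) - 2) ∪ {6 * (n : ℤ) - 3}
    IsSumLabeling (matching n) L ∧
    (∀ a ∈ Finset.Icc (2 * (n : ℤ) - 1) (4 * (n : ℤ) - 2),
      (6 * (n : ℤ) - 3 - a ∈ L) ∧
      (∀ b ∈ L, (b ≠ a ∧ a + b ∈ L) ↔ b = 6 * (n : ℤ) - 3 - a)) ∧
    (∀ b ∈ L, b ≠ 6 * (n : ℤ) - 3 → 6 * (n : ℤ) - 3 + b ∉ L) :=
  stmt0_general n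
end

section
/- For even n ≥ 4, the set L = {1, 3, 5, ..., 2n-3} ∪ {2n-4, 2n} induces as its sum graph a path on n vertices together with one isolated vertex (the vertex 2n is isolated, and the remaining n labels form a path). -/
/-! Label the path `0, 1, …, n-1` by `2n-4, 1, 2n-5, 3, 2n-7, 5, …`: odd positions `i` carry
`2i-1 ≡ 1 (mod 4)`, even positions `i > 0` carry `2n-2i-1 ≡ 3 (mod 4)`. Two odd labels sum to
an even number, which lies in `L` only if it is `2n-4` or `2n`, both `≡ 0 (mod 4)` as `n` is even;
so one label is from each class, and `(2i-1) + (2n-2j-1) ∈ {2n-4, 2n}` means `j = i ± 1`. The even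
label `2n-4` plus an odd label stays below `2n-2` only for the label `1`, at position `1`.
Finally `2n` is isolated because `2n + b` exceeds every element of `L`. -/

theorem sumGraph_adj {L : Finset ℤ} {a b : {x // x ∈ L}} :
    (sumGraph L).Adj a b ↔ a ≠ b ∧ (a : ℤ) + b ∈ L := by
  rw [sumGraph, SimpleGraph.fromRel_adj, add_comm (b : ℤ), or_self]

theorem nonempty_iso_induce_sumGraph {V : Type*} (H : SimpleGraph V) (L : Finset ℤ)
    (p : ℤ → Prop) (g : V → ℤ) (hg : Function.Injective g)
    (hrange : ∀ x, x ∈ Set.range g ↔ x ∈ L ∧ p x)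
    (hadj : ∀ u v, u ≠ v → (H.Adj u v ↔ g u + g v ∈ L)) :
    Nonempty (H ≃g (sumGraph L).induce {x : {y // y ∈ L} | p x}) := by
  have hmem (v : V) : g v ∈ L ∧ p (g v) := (hrange _).1 ⟨v, rfl⟩
  let F : V → {x : {y // y ∈ L} | p x} := fun v => ⟨⟨g v, (hmem v).1⟩, (hmem v).2⟩
  have hF : Function.Bijective F := by
    refine ⟨fun u v h => hg (by simpa [F] using h), ?_⟩
    rintro ⟨⟨x, hx⟩, hpx⟩
    obtain ⟨v, rfl⟩ := (hrange x).2 ⟨hx, hpx⟩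
    exact ⟨v, rfl⟩
  refine ⟨⟨Equiv.ofBijective F hF, fun {u v} => ?_⟩⟩
  simp only [SimpleGraph.comap_adj, sumGraph_adj, Function.Embedding.coe_subtype,
    Equiv.ofBijective_apply]
  by_cases huv : u = v
  · subst huv
    simp
  · simp [F, hg.ne huv, hadj u v huv]

def pathLabelSet (n : ℕ) : Finset ℤ :=
  ((Finset.range (n - 1)).image (fun k : ℕ => 2 * (k : ℤ) + 1)) ∪ {2 * (n : ℤ) - 4, 2 * (n : ℤ)}

theorem mem_pathLabelSet {n : ℕ} {x : ℤ} :
    x ∈ pathLabelSet n ↔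
      (x % 2 = 1 ∧ 1 ≤ x ∧ x ≤ 2 * (n : ℤ) - 3) ∨ x = 2 * (n : ℤ) - 4 ∨ x = 2 * (n : ℤ) := by
  simp only [pathLabelSet, Finset.mem_union, Finset.mem_image, Finset.mem_range,
    Finset.mem_insert, Finset.mem_singleton]
  constructor
  · rintro (⟨k, hk, rfl⟩ | h | h) <;> omega
  · rintro (⟨hodd, hpos, hle⟩ | h | h)
    · exact Or.inl ⟨(x - 1).toNat / 2, by omega, by omega⟩
    · exact Or.inr (Or.inl h)
    · exact Or.inr (Or.inr h)

theorem two_mul_add_notMem_pathLabelSet {n : ℕ} (hn : 3 ≤ n) {b : ℤ}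
    (hb : b ∈ pathLabelSet n) (hbn : b ≠ 2 * (n : ℤ)) : 2 * (n : ℤ) + b ∉ pathLabelSet n := by
  rw [mem_pathLabelSet] at hb ⊢
  omega

def pathLabel (n i : ℕ) : ℤ :=
  if i = 0 then 2 * (n : ℤ) - 4
  else if i % 2 = 1 then 2 * (i : ℤ) - 1
  else 2 * (n : ℤ) - 2 * (i : ℤ) - 1

theorem pathLabel_cases (n i : ℕ) :
    (i = 0 ∧ pathLabel n i = 2 * (n : ℤ) - 4) ∨
    (i % 2 = 1 ∧ pathLabel n i = 2 * (i : ℤ) - 1) ∨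
    (i ≠ 0 ∧ i % 2 = 0 ∧ pathLabel n i = 2 * (n : ℤ) - 2 * (i : ℤ) - 1) := by
  unfold pathLabel
  split_ifs <;> omega

theorem pathLabel_injOn {n : ℕ} (hev : Even n) : Set.InjOn (pathLabel n) (Set.Iio n) := by
  intro i hi j hj hij
  simp only [Set.mem_Iio] at hi hj
  have hn2 := Nat.even_iff.mp hev
  rcases pathLabel_cases n i with ⟨_, hi'⟩ | ⟨_, hi'⟩ | ⟨_, _, hi'⟩ <;>
    rcases pathLabel_cases n j with ⟨_, hj'⟩ | ⟨_, hj'⟩ | ⟨_, _, hj'⟩ <;> omega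

theorem exists_pathLabel_eq_iff {n : ℕ} (hev : Even n) (hn0 : 0 < n) {x : ℤ} :
    (∃ i < n, pathLabel n i = x) ↔ x ∈ pathLabelSet n ∧ x ≠ 2 * (n : ℤ) := by
  have hn2 := Nat.even_iff.mp hev
  rw [mem_pathLabelSet]
  constructor
  · rintro ⟨i, hi, rfl⟩
    rcases pathLabel_cases n i with ⟨_, h⟩ | ⟨_, h⟩ | ⟨_, _, h⟩ <;> omega
  · rintro ⟨⟨hodd, hpos, hle⟩ | h | h, hx⟩
    · by_cases hx4 : x % 4 = 1
      · refine ⟨(x + 1).toNat / 2, by omega, ?_⟩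
        rcases pathLabel_cases n ((x + 1).toNat / 2) with ⟨_, h⟩ | ⟨_, h⟩ | ⟨_, _, h⟩ <;> omega
      · refine ⟨n - (x + 1).toNat / 2, by omega, ?_⟩
        rcases pathLabel_cases n (n - (x + 1).toNat / 2) with ⟨_, h⟩ | ⟨_, h⟩ | ⟨_, _, h⟩ <;> omega
    · exact ⟨0, by omega, by simp [pathLabel, h]⟩
    · exact absurd h hx

theorem pathLabel_add_mem_iff {n : ℕ} (hev : Even n) {i j : ℕ} (hi : i < n) (hj : j < n)
    (hij : i ≠ j) : pathLabel n i + pathLabel n j ∈ pathLabelSet n ↔ i + 1 = j ∨ j + 1 = i := by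
  have hn2 := Nat.even_iff.mp hev
  rw [mem_pathLabelSet]
  rcases pathLabel_cases n i with ⟨_, hi'⟩ | ⟨_, hi'⟩ | ⟨_, _, hi'⟩ <;>
    rcases pathLabel_cases n j with ⟨_, hj'⟩ | ⟨_, hj'⟩ | ⟨_, _, hj'⟩ <;> omega

/-- For even `n ≥ 4`, the set `L = {1, 3, 5, ..., 2n-3} ∪ {2n-4, 2n}` induces a path on `n`
vertices plus one isolated vertex: `2n` is isolated and the remaining `n` labels form a path. -/
theorem stmt1 (n : ℕ) (hn : 4 ≤ n) (hev : Even n) :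
    let L : Finset ℤ :=
      ((Finset.range (n - 1)).image (fun k : ℕ => 2 * (k : ℤ) + 1)) ∪ {2 * (n : ℤ) - 4, 2 * (n : ℤ)}
    (∀ b ∈ L, b ≠ 2 * (n : ℤ) → 2 * (n : ℤ) + b ∉ L) ∧
    Nonempty (SimpleGraph.pathGraph n ≃g
      (sumGraph L).induce {x : {y : ℤ // y ∈ L} | (x : ℤ) ≠ 2 * (n : ℤ)}) := by
  refine ⟨fun b hb hbn => two_mul_add_notMem_pathLabelSet (by omega) hb hbn, ?_⟩
  refine nonempty_iso_induce_sumGraph _ (pathLabelSet n) (· ≠ 2 * (n : ℤ))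
    (fun i : Fin n => pathLabel n i) ?_ ?_ ?_
  · exact fun i j h => Fin.ext (pathLabel_injOn hev i.2 j.2 h)
  · intro x
    rw [← exists_pathLabel_eq_iff hev (by omega)]
    simp only [Set.mem_range, Fin.exists_iff, exists_prop]
  · intro i j hij
    rw [SimpleGraph.pathGraph_adj, pathLabel_add_mem_iff hev i.2 j.2 (Fin.val_ne_of_ne hij)]
end

section
/- Let G be a graph of order n with no isolated vertices, with maximum vertex degree Δ and minimum vertex degree δ. Then the sum-diameter of G satisfies sd(G) ≥ 2n - (Δ - δ) - 2. -/
/-!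
Let `x` and `y` be the vertices of smallest and largest label. Besides the `n` vertex labels, `L`
contains the `deg y ≥ δ` sums `f y + f w` over the neighbours `w` of `y`, all above every vertex
label. The `n - 1 - deg x ≥ n - 1 - Δ` sums `f x + f w` over the non-neighbours `w ≠ x` of `x`
are not in `L`, yet lie in `[min L, max L]`, being at most `f y + f z ∈ L` for a neighbour `z`
of `y`. So `[min L, max L]` contains at least `2n - 1 - (Δ - δ)` integers.

For the minimum defining `sd(G)` to be attained, some labeling by positive integers must exist.
-/

open Finset

theorem two_pow_add_two_pow_eq_iff {i j k l : ℕ} (hij : i ≠ j) (hkl : k ≠ l) :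
    2 ^ i + 2 ^ j = 2 ^ k + 2 ^ l ↔ (i = k ∧ j = l) ∨ (i = l ∧ j = k) := by
  rw [← sum_pair (f := (2 ^ ·)) hij, ← sum_pair (f := (2 ^ ·)) hkl,
    (geomSum_injective le_rfl).eq_iff, ← coe_inj, coe_pair, coe_pair, Set.pair_eq_pair_iff]

section Construction

variable {V : Type*} [Fintype V] (G : SimpleGraph V) [DecidableRel G.Adj]

def edgeSumSet (f : V → ℤ) : Finset ℤ :=
  univ.image f ∪ (univ.filter fun p : V × V => G.Adj p.1 p.2).image fun p => f p.1 + f p.2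

lemma mem_edgeSumSet {f : V → ℤ} {x : ℤ} :
    x ∈ edgeSumSet G f ↔ (∃ v, f v = x) ∨ ∃ u v, G.Adj u v ∧ f u + f v = x := by
  simp [edgeSumSet]

variable {G}

/-- The ratio bound puts every edge sum above every label, and every sum of an edge sum with
another element above every edge sum. -/
theorem isSumLabeling_edgeSumSet {f : V → ℤ} (hf : Function.Injective f)
    (hsidon : ∀ {u v p q}, u ≠ v → p ≠ q → f u + f v = f p + f q →
      (u = p ∧ v = q) ∨ (u = q ∧ v = p))
    (hratio : ∀ u v, 2 * f u < 3 * f v) :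
    IsSumLabeling G (edgeSumSet G f) := by
  have hpos (v : V) : 0 < f v := by have := hratio v v; omega
  refine ⟨f, hf, fun v => (mem_edgeSumSet G).2 (.inl ⟨v, rfl⟩), fun u v => ?_, ?_⟩
  · refine ⟨fun h => ⟨hf.ne h.ne, (mem_edgeSumSet G).2 (.inr ⟨u, v, h, rfl⟩)⟩, ?_⟩
    rintro ⟨hne, hmem⟩
    rcases (mem_edgeSumSet G).1 hmem with ⟨w, hw⟩ | ⟨p, q, hpq, hsum⟩
    · have := hratio w u; have := hratio w v; have := hpos w; omega
    · rcases hsidon (hf.ne_iff.1 hne) hpq.ne hsum.symm with ⟨rfl, rfl⟩ | ⟨rfl, rfl⟩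
      exacts [hpq, hpq.symm]
  · intro a ha hnot b hb _ hab
    obtain ⟨p, q, -, rfl⟩ : ∃ p q, G.Adj p q ∧ f p + f q = a :=
      ((mem_edgeSumSet G).1 ha).resolve_left hnot
    have hb_ge : ∃ w, f w ≤ b := by
      rcases (mem_edgeSumSet G).1 hb with ⟨w, rfl⟩ | ⟨w, w', -, rfl⟩
      · exact ⟨w, le_rfl⟩
      · exact ⟨w, by have := hpos w'; omega⟩
    obtain ⟨w, hw⟩ := hb_ge
    rcases (mem_edgeSumSet G).1 hab with ⟨r, hr⟩ | ⟨r, s, -, hrs⟩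
    · have := hratio r p; have := hratio r q; have := hpos r; have := hpos w; omega
    · have := hratio r p; have := hratio s q; have := hratio s w; have := hratio r w
      omega

end Construction

/-- The labels `2 ^ (n + 1) + 2 ^ i`, `i < n`, have pairwise distinct sums of two distinct
labels, and any two of them are within a factor `3 / 2` of each other. -/
theorem exists_pos_isSumLabeling {V : Type*} [Fintype V] [Nonempty V] (G : SimpleGraph V) :
    ∃ L : Finset ℤ, (∀ x ∈ L, 0 < x) ∧ IsSumLabeling G L ∧ L.Nonempty := by
  classical
  set n := Fintype.card V
  let e := Fintype.equivFin V
  let f : V → ℤ := fun v => 2 ^ (n + 1) + 2 ^ (e v : ℕ)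
  have he : Function.Injective fun v => (e v : ℕ) := Fin.val_injective.comp e.injective
  have hf : Function.Injective f := fun u v h =>
    he (Nat.pow_right_injective le_rfl (by simpa [f] using h))
  have hsidon {u v p q : V} (huv : u ≠ v) (hpq : p ≠ q) (h : f u + f v = f p + f q) :
      (u = p ∧ v = q) ∨ (u = q ∧ v = p) := by
    have h' : 2 ^ (e u : ℕ) + 2 ^ (e v : ℕ) = 2 ^ (e p : ℕ) + 2 ^ (e q : ℕ) := by
      have : (2 : ℤ) ^ (e u : ℕ) + 2 ^ (e v : ℕ) = 2 ^ (e p : ℕ) + 2 ^ (e q : ℕ) := by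
        simp only [f] at h; linarith
      exact_mod_cast this
    simpa only [he.eq_iff] using (two_pow_add_two_pow_eq_iff (he.ne huv) (he.ne hpq)).1 h'
  have hratio (u v : V) : 2 * f u < 3 * f v := by
    have : (2 : ℤ) ^ (e u : ℕ) * 2 < 2 ^ (n + 1) := by
      rw [← pow_succ]; exact pow_lt_pow_right₀ one_lt_two (by have := (e u).isLt; omega)
    have : (0 : ℤ) < 2 ^ (e v : ℕ) := by positivity
    simp only [f]; linarith
  refine ⟨edgeSumSet G f, fun x hx => ?_, isSumLabeling_edgeSumSet hf hsidon hratio,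
    ⟨f (Classical.arbitrary V), (mem_edgeSumSet G).2 (.inl ⟨_, rfl⟩)⟩⟩
  rcases (mem_edgeSumSet G).1 hx with ⟨v, rfl⟩ | ⟨u, v, -, rfl⟩ <;> positivity

theorem exists_isSumLabeling_sumDiam_eq {V : Type*} [Fintype V] [Nonempty V]
    (G : SimpleGraph V) :
    ∃ L : Finset ℤ, (∀ x ∈ L, 0 < x) ∧ IsSumLabeling G L ∧
      ∃ hL : L.Nonempty, L.max' hL - L.min' hL = sumDiam G := by
  obtain ⟨L₀, hpos₀, hlab₀, hL₀⟩ := exists_pos_isSumLabeling G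
  obtain ⟨L, hpos, hlab, hL, hdiam⟩ :=
    Nat.sInf_mem ⟨_, L₀, hpos₀, hlab₀, hL₀, rfl⟩ (s := {d | ∃ L : Finset ℤ, (∀ x ∈ L, 0 < x) ∧
      IsSumLabeling G L ∧ ∃ hL : L.Nonempty, (L.max' hL - L.min' hL).toNat = d})
  refine ⟨L, hpos, hlab, hL, ?_⟩
  rw [sumDiam, ← hdiam, Int.toNat_of_nonneg (sub_nonneg.2 (min'_le_max' L hL))]

theorem le_max'_sub_min'_of_isSumLabeling {V : Type*} [Fintype V] [Nonempty V]
    (G : SimpleGraph V) [DecidableRel G.Adj] (hiso : ∀ v : V, ∃ w : V, G.Adj v w) {L : Finset ℤ}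
    (hpos : ∀ x ∈ L, 0 < x) (hlab : IsSumLabeling G L) (hL : L.Nonempty) :
    2 * (Fintype.card V : ℤ) - ((G.maxDegree : ℤ) - (G.minDegree : ℤ)) - 2
      ≤ L.max' hL - L.min' hL := by
  classical
  obtain ⟨f, hf, hmem, hadj, -⟩ := hlab
  obtain ⟨x, -, hx⟩ := exists_min_image univ f univ_nonempty
  obtain ⟨y, -, hy⟩ := exists_max_image univ f univ_nonempty
  have hfpos (v : V) : 0 < f v := hpos _ (hmem v)
  have hsum {u v : V} (h : G.Adj u v) : f u + f v ∈ L := ((hadj u v).1 h).2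
  let A := univ.image f
  let B := (G.neighborFinset y).image fun w => f y + f w
  let C := (insert x (G.neighborFinset x))ᶜ.image fun w => f x + f w
  have hAB : A ∪ B ⊆ L := by
    simp only [A, B, union_subset_iff, image_subset_iff, SimpleGraph.mem_neighborFinset]
    exact ⟨fun v _ => hmem v, fun w hw => hsum hw⟩
  have hA_B : Disjoint A B := by
    simp only [A, B, disjoint_left, mem_image]
    rintro _ ⟨v, -, rfl⟩ ⟨w, -, hw⟩
    linarith [hy v (mem_univ v), hfpos w]
  have hLC : Disjoint L C := by
    simp only [C, disjoint_right, mem_image, mem_compl, mem_insert,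
      SimpleGraph.mem_neighborFinset, not_or]
    rintro _ ⟨w, ⟨hwx, hnadj⟩, rfl⟩ hmemL
    exact hnadj ((hadj x w).2 ⟨hf.ne (Ne.symm hwx), hmemL⟩)
  have hABC : A ∪ B ∪ C ⊆ Icc (L.min' hL) (L.max' hL) := by
    obtain ⟨z, hz⟩ := hiso y
    refine union_subset (hAB.trans fun a ha => mem_Icc.2 ⟨min'_le L a ha, le_max' L a ha⟩) ?_
    simp only [C, image_subset_iff, mem_Icc]
    intro w _
    have := min'_le L _ (hmem w)
    have := le_max' L _ (hsum hz.symm)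
    have := hfpos x; have := hy w (mem_univ w); have := hx z (mem_univ z)
    constructor <;> linarith
  have hshift (c : ℤ) : Function.Injective fun w => c + f w := (add_right_injective c).comp hf
  have hcardA : #A = Fintype.card V := by rw [card_image_of_injective _ hf, card_univ]
  have hcardB : #B = G.degree y := by
    rw [card_image_of_injective _ (hshift _), SimpleGraph.card_neighborFinset_eq_degree]
  have hcardC : #C + (G.degree x + 1) = Fintype.card V := by
    rw [card_image_of_injective _ (hshift _), card_compl, card_insert_of_notMem (by simp),
      SimpleGraph.card_neighborFinset_eq_degree, Nat.sub_add_cancel (G.degree_lt_card_verts x)]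
  have hcount : ((#A + #B + #C : ℕ) : ℤ) ≤ L.max' hL + 1 - L.min' hL := by
    rw [← Int.card_Icc_of_le _ _ (by linarith [min'_le_max' L hL])]
    rw [← card_union_of_disjoint hA_B, ← card_union_of_disjoint (hLC.mono_left hAB)]
    exact_mod_cast card_le_card hABC
  have := G.minDegree_le_degree y
  have := G.degree_le_maxDegree x
  push_cast at hcount
  omega

/-- For a graph `G` of order `n` with no isolated vertices, maximum degree `Δ` and minimum
degree `δ`, one has `sd(G) ≥ 2n - (Δ - δ) - 2`. -/
theorem stmt3 {V : Type*} [Fintype V] (G : SimpleGraph V) [DecidableRel G.Adj]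
    (hiso : ∀ v : V, ∃ w : V, G.Adj v w) :
    2 * (Fintype.card V : ℤ) - ((G.maxDegree : ℤ) - (G.minDegree : ℤ)) - 2 ≤ (sumDiam G : ℤ) := by
  rcases isEmpty_or_nonempty V with _ | _
  · have : (G.minDegree : ℤ) ≤ G.maxDegree := mod_cast G.minDegree_le_maxDegree
    rw [Fintype.card_eq_zero]
    omega
  · obtain ⟨L, hpos, hlab, hL, hdiam⟩ := exists_isSumLabeling_sumDiam_eq G
    exact hdiam ▸ le_max'_sub_min'_of_isSumLabeling G hiso hpos hlab hL
end

section
/- Let G be a graph of order n with no isolated vertices and maximum vertex degree Δ. Then the integral sum-diameter of G satisfies isd(G) ≥ 2n - Δ - 3. -/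
/-!
Fix a sum labeling `f` of `G` inside `L ⊆ [m, M]` and put `S = f(V)`, so `|S| = n`. For a label
`a ∈ S`, at most `Δ` of the other labels `u ∈ S` have `u + a ∈ L`, so at least `n - 1 - Δ` of
them are *non-partners* of `a`, and `u ↦ u + a` is injective. The whole point is to choose `a`
so that these sums `u + a ∉ L` fall into `[m, M] \ S` (of size `M - m + 1 - n`) up to one
extra point, which gives `n - 1 - Δ ≤ M - m + 2 - n`. Take `a = 0` if `0 ∈ S`, the least label
if all labels are positive (a neighbour of the largest label keeps every `u + a` below `M`), and
otherwise the label of least absolute value among the largest negative and the smallest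
positive one; the negation `L ↦ -L` removes the remaining cases.
-/

open Finset Pointwise

lemma Nat.log_two_pow_add_two_pow {i j : ℕ} (h : i < j) : Nat.log 2 (2 ^ i + 2 ^ j) = j :=
  Nat.log_eq_of_pow_le_of_lt_pow (Nat.le_add_left _ _) <| by
    rw [pow_succ, mul_two]
    exact Nat.add_lt_add_right (Nat.pow_lt_pow_right (by norm_num) h) _

lemma Nat.two_pow_add_two_pow_inj {i j k l : ℕ} (hij : i ≠ j) (hkl : k ≠ l)
    (h : 2 ^ i + 2 ^ j = 2 ^ k + 2 ^ l) : i = k ∧ j = l ∨ i = l ∧ j = k := by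
  have key {i j k l : ℕ} (hij : i < j) (hkl : k < l) (h : 2 ^ i + 2 ^ j = 2 ^ k + 2 ^ l) :
      i = k ∧ j = l := by
    obtain rfl : j = l := by
      rw [← Nat.log_two_pow_add_two_pow hij, h, Nat.log_two_pow_add_two_pow hkl]
    exact ⟨Nat.pow_right_injective le_rfl (Nat.add_right_cancel h), rfl⟩
  rcases hij.lt_or_gt with hij | hij <;> rcases hkl.lt_or_gt with hkl | hkl
  · exact .inl (key hij hkl h)
  · exact .inr (key hij hkl (h.trans (add_comm _ _)))
  · exact .inr (key hij hkl ((add_comm _ _).trans h)).symm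
  · exact .inl (key hij hkl (by rw [add_comm, h, add_comm])).symm

namespace SumLabeling

def nonPartners (S L : Finset ℤ) (a : ℤ) : Finset ℤ := {u ∈ S.erase a | u + a ∉ L}

lemma nonPartners_neg (S L : Finset ℤ) (a : ℤ) :
    nonPartners (-S) (-L) (-a) = -nonPartners S L a := by
  ext x
  simp only [nonPartners, mem_filter, mem_erase, mem_neg', neg_add_rev, neg_neg, ne_eq,
    neg_eq_iff_eq_neg, add_comm]

lemma neg_subset_Icc_neg {L : Finset ℤ} {m M : ℤ} (hL : L ⊆ Icc m M) : -L ⊆ Icc (-M) (-m) := by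
  intro x hx
  have := mem_Icc.mp (hL (mem_neg'.mp hx))
  exact mem_Icc.mpr ⟨by linarith, by linarith⟩

lemma card_nonPartners_le {S L T : Finset ℤ} {a : ℤ}
    (hT : ∀ u ∈ nonPartners S L a, u + a ∈ T) : #(nonPartners S L a) ≤ #T :=
  card_le_card_of_injOn (· + a) hT (add_left_injective a).injOn

lemma card_Icc_sdiff_of_subset {S : Finset ℤ} {m M : ℤ} (hmM : m ≤ M) (hS : S ⊆ Icc m M) :
    (#(Icc m M \ S) : ℤ) = M + 1 - m - #S := by
  rw [card_sdiff_of_subset hS, Nat.cast_sub (card_le_card hS), Int.card_Icc,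
    Int.toNat_of_nonneg (by omega)]

section Cases

variable {S L : Finset ℤ} {m M : ℤ}

lemma card_nonPartners_add_card_le_of_zero_mem (hSL : S ⊆ L) (hL : L ⊆ Icc m M) (h0 : (0 : ℤ) ∈ S) :
    (#(nonPartners S L 0) : ℤ) + #S ≤ M - m + 2 := by
  have hempty : nonPartners S L 0 = ∅ :=
    filter_false_of_mem fun u hu => by simpa using hSL (mem_of_mem_erase hu)
  have hmM : m ≤ M := by have := mem_Icc.mp (hL (hSL h0)); omega
  have := card_Icc_sdiff_of_subset hmM (hSL.trans hL)
  rw [hempty, card_empty]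
  omega

lemma card_nonPartners_add_card_le_of_pos (hSL : S ⊆ L) (hL : L ⊆ Icc m M)
    (hpartner : ∀ x ∈ S, ∃ y ∈ S, x + y ∈ L) {b : ℤ} (hb : b ∈ S) (hb0 : 0 < b)
    (hbS : ∀ x ∈ S, b ≤ x) :
    (#(nonPartners S L b) : ℤ) + #S ≤ M - m + 2 := by
  have hSI := hSL.trans hL
  obtain ⟨y, hy, hxy⟩ := hpartner (S.max' ⟨b, hb⟩) (S.max'_mem _)
  have hmap : ∀ u ∈ nonPartners S L b, u + b ∈ Icc m M \ S := by
    intro u hu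
    simp only [nonPartners, mem_filter, mem_erase] at hu
    have huI := mem_Icc.mp (hSI hu.1.2)
    have hu_le := S.le_max' u hu.1.2
    have hby := hbS y hy
    have hsum_le := (mem_Icc.mp (hL hxy)).2
    exact mem_sdiff.mpr ⟨mem_Icc.mpr ⟨by omega, by omega⟩, fun h => hu.2 (hSL h)⟩
  have := card_nonPartners_le hmap
  have := card_Icc_sdiff_of_subset (by have := mem_Icc.mp (hSI hb); omega) hSI
  omega

/-- With `a` the largest negative and `b` the smallest positive label, `-a ≤ b`, every `u + a`
with `u ∈ S` lies in a gap of `L`, in `[m + a, m)` or in `[a + b, b)`; the two extra intervals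
have `-2a` points, which the gap `(a, b)`, of `b - a - 1 ≥ -2a - 1` points, pays for. -/
lemma card_nonPartners_add_card_le_of_mixed (hSL : S ⊆ L) (hL : L ⊆ Icc m M) {a b : ℤ}
    (ha : a ∈ S) (hb : b ∈ S) (ha0 : a < 0) (hab : -a ≤ b) (hS : ∀ x ∈ S, x ≤ a ∨ b ≤ x) :
    (#(nonPartners S L a) : ℤ) + #S ≤ M - m + 2 := by
  have hSI := hSL.trans hL
  have haI := mem_Icc.mp (hSI ha)
  have hbI := mem_Icc.mp (hSI hb)
  have hgap : Ioo a b ⊆ Icc m M \ S := by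
    intro x hx
    have := mem_Ioo.mp hx
    refine mem_sdiff.mpr ⟨mem_Icc.mpr ⟨by omega, by omega⟩, fun h => ?_⟩
    have := hS x h
    omega
  have hmap : ∀ u ∈ nonPartners S L a,
      u + a ∈ Ico (m + a) m ∪ Ico (a + b) b ∪ ((Icc m M \ S) \ Ioo a b) := by
    intro u hu
    simp only [nonPartners, mem_filter, mem_erase] at hu
    have huI := mem_Icc.mp (hSI hu.1.2)
    have hua := hS u hu.1.2
    have hnS : u + a ∉ S := fun h => hu.2 (hSL h)
    simp only [mem_union, mem_Ico, mem_sdiff, mem_Icc, mem_Ioo, hnS, not_false_eq_true, and_true]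
    omega
  have hT := (card_nonPartners_le hmap).trans <|
    (card_union_le _ _).trans (Nat.add_le_add_right (card_union_le _ _) _)
  rw [card_sdiff_of_subset hgap, Int.card_Ico, Int.card_Ico] at hT
  have hIoo : (#(Ioo a b) : ℤ) = b - a - 1 := by rw [Int.card_Ioo]; omega
  have := card_le_card hgap
  have := card_Icc_sdiff_of_subset (by omega) hSI
  omega

def HasFewNonPartners (S L : Finset ℤ) (m M : ℤ) : Prop :=
  ∃ a ∈ S, (#(nonPartners S L a) : ℤ) + #S ≤ M - m + 2

lemma HasFewNonPartners.of_neg (h : HasFewNonPartners (-S) (-L) (-M) (-m)) :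
    HasFewNonPartners S L m M := by
  obtain ⟨a, ha, h⟩ := h
  refine ⟨-a, mem_neg'.mp ha, ?_⟩
  rw [← neg_neg a, nonPartners_neg, card_neg, card_neg] at h
  linarith

lemma hasFewNonPartners_of_forall_pos (hSL : S ⊆ L) (hL : L ⊆ Icc m M)
    (hpartner : ∀ x ∈ S, ∃ y ∈ S, x + y ∈ L) (hS : S.Nonempty) (hpos : ∀ x ∈ S, 0 < x) :
    HasFewNonPartners S L m M :=
  ⟨S.min' hS, S.min'_mem hS, card_nonPartners_add_card_le_of_pos hSL hL hpartner (S.min'_mem hS)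
    (hpos _ (S.min'_mem hS)) fun x hx => S.min'_le x hx⟩

lemma hasFewNonPartners_of_forall_neg (hSL : S ⊆ L) (hL : L ⊆ Icc m M)
    (hpartner : ∀ x ∈ S, ∃ y ∈ S, x + y ∈ L) (hS : S.Nonempty) (hneg : ∀ x ∈ S, x < 0) :
    HasFewNonPartners S L m M := by
  refine .of_neg <| hasFewNonPartners_of_forall_pos (neg_subset_neg hSL) (neg_subset_Icc_neg hL)
    (fun x hx => ?_) hS.neg fun x hx => neg_lt_zero.mp (hneg _ (mem_neg'.mp hx))
  obtain ⟨y, hy, hxy⟩ := hpartner (-x) (mem_neg'.mp hx)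
  exact ⟨-y, neg_mem_neg hy, mem_neg'.mpr (by rwa [neg_add, neg_neg])⟩

lemma hasFewNonPartners_of_mixed (hSL : S ⊆ L) (hL : L ⊆ Icc m M) (h0 : (0 : ℤ) ∉ S)
    (hneg : ∃ x ∈ S, x < 0) (hpos : ∃ x ∈ S, 0 < x) : HasFewNonPartners S L m M := by
  have hN : {x ∈ S | x < 0}.Nonempty := by simpa [Finset.Nonempty] using hneg
  have hP : {x ∈ S | 0 < x}.Nonempty := by simpa [Finset.Nonempty] using hpos
  obtain ⟨haS, ha0⟩ := mem_filter.mp (max'_mem _ hN)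
  obtain ⟨hbS, hb0⟩ := mem_filter.mp (min'_mem _ hP)
  set a := max' _ hN
  set b := min' _ hP
  have hsplit : ∀ x ∈ S, x ≤ a ∨ b ≤ x := by
    intro x hx
    rcases lt_trichotomy x 0 with h | rfl | h
    · exact .inl (le_max' _ x (mem_filter.mpr ⟨hx, h⟩))
    · exact absurd hx h0
    · exact .inr (min'_le _ x (mem_filter.mpr ⟨hx, h⟩))
  by_cases hab : -a ≤ b
  · exact ⟨a, haS, card_nonPartners_add_card_le_of_mixed hSL hL haS hbS ha0 hab hsplit⟩
  · refine .of_neg ⟨-b, neg_mem_neg hbS, card_nonPartners_add_card_le_of_mixed (neg_subset_neg hSL)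
      (neg_subset_Icc_neg hL) (neg_mem_neg hbS) (neg_mem_neg haS) (by omega) (by omega)
      fun x hx => ?_⟩
    have := hsplit (-x) (mem_neg'.mp hx)
    omega

lemma hasFewNonPartners (hSL : S ⊆ L) (hL : L ⊆ Icc m M)
    (hpartner : ∀ x ∈ S, ∃ y ∈ S, x + y ∈ L) (hS : S.Nonempty) : HasFewNonPartners S L m M := by
  by_cases h0 : (0 : ℤ) ∈ S
  · exact ⟨0, h0, card_nonPartners_add_card_le_of_zero_mem hSL hL h0⟩
  have hne : ∀ x ∈ S, x ≠ 0 := fun x hx => ne_of_mem_of_not_mem hx h0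
  by_cases hneg : ∃ x ∈ S, x < 0
  · by_cases hpos : ∃ x ∈ S, 0 < x
    · exact hasFewNonPartners_of_mixed hSL hL h0 hneg hpos
    · exact hasFewNonPartners_of_forall_neg hSL hL hpartner hS fun x hx =>
        (hne x hx).lt_or_gt.resolve_right fun h => hpos ⟨x, hx, h⟩
  · exact hasFewNonPartners_of_forall_pos hSL hL hpartner hS fun x hx =>
      (hne x hx).lt_or_gt.resolve_left fun h => hneg ⟨x, hx, h⟩

end Cases

lemma card_le_maxDegree_add_card_nonPartners {V : Type*} [Fintype V] (G : SimpleGraph V)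
    [DecidableRel G.Adj] {L : Finset ℤ} {f : V → ℤ} (hinj : Function.Injective f)
    (hadj : ∀ u v : V, G.Adj u v ↔ (f u ≠ f v ∧ f u + f v ∈ L)) (w : V) :
    Fintype.card V ≤ G.maxDegree + #(nonPartners (univ.image f) L (f w)) + 1 := by
  classical
  have hpartners :
      {u ∈ (univ.image f).erase (f w) | u + f w ∈ L} ⊆ (G.neighborFinset w).image f := by
    intro u hu
    obtain ⟨⟨hne, hu⟩, hsum⟩ := by simpa only [mem_filter, mem_erase] using hu
    obtain ⟨v, -, rfl⟩ := mem_image.mp hu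
    exact mem_image_of_mem f <| (G.mem_neighborFinset w v).mpr <|
      (hadj w v).mpr ⟨hne.symm, by rwa [add_comm]⟩
  calc Fintype.card V = #((univ.image f).erase (f w)) + 1 := by
        rw [card_erase_add_one (mem_image_of_mem f (mem_univ w)), card_image_of_injective _ hinj,
          card_univ]
    _ = #{u ∈ (univ.image f).erase (f w) | u + f w ∈ L} + #(nonPartners (univ.image f) L (f w))
          + 1 := by rw [nonPartners, card_filter_add_card_filter_not]
    _ ≤ G.maxDegree + #(nonPartners (univ.image f) L (f w)) + 1 := by
      gcongr
      exact (card_le_card hpartners).trans <| card_image_le.trans (G.degree_le_maxDegree w)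

lemma le_range_of_isSumLabeling {V : Type*} [Fintype V] [Nonempty V] (G : SimpleGraph V)
    [DecidableRel G.Adj] (hiso : ∀ v : V, ∃ w : V, G.Adj v w) {L : Finset ℤ}
    (hlab : IsSumLabeling G L) (hL : L.Nonempty) :
    2 * (Fintype.card V : ℤ) - G.maxDegree - 3 ≤ L.max' hL - L.min' hL := by
  classical
  obtain ⟨f, hinj, hmem, hadj, -⟩ := hlab
  have hSL : univ.image f ⊆ L := by
    intro x hx
    obtain ⟨v, -, rfl⟩ := mem_image.mp hx
    exact hmem v
  have hLI : L ⊆ Icc (L.min' hL) (L.max' hL) := fun x hx =>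
    mem_Icc.mpr ⟨L.min'_le x hx, L.le_max' x hx⟩
  have hpartner : ∀ x ∈ univ.image f, ∃ y ∈ univ.image f, x + y ∈ L := by
    intro x hx
    obtain ⟨v, -, rfl⟩ := mem_image.mp hx
    obtain ⟨w, hvw⟩ := hiso v
    exact ⟨f w, mem_image_of_mem f (mem_univ w), ((hadj v w).mp hvw).2⟩
  obtain ⟨a, ha, hfew⟩ := hasFewNonPartners hSL hLI hpartner (univ_nonempty.image f)
  obtain ⟨w, -, rfl⟩ := mem_image.mp ha
  have hdeg := card_le_maxDegree_add_card_nonPartners G hinj hadj w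
  rw [card_image_of_injective _ hinj, card_univ] at hfew
  omega

/-- Vertex labels are `1` and edge labels `2` modulo `4`, so a sum involving an edge label is
`3` or `0` modulo `4` and never a label: the edge labels are isolated. -/
lemma exists_isSumLabeling {V : Type*} [Fintype V] (G : SimpleGraph V) :
    ∃ L : Finset ℤ, IsSumLabeling G L ∧ (Nonempty V → L.Nonempty) := by
  classical
  let e := Fintype.equivFin V
  let f : V → ℤ := fun v => 4 * 2 ^ (e v : ℕ) + 1
  let L := univ.image f ∪ (univ.filter fun p : V × V => G.Adj p.1 p.2).image fun p => f p.1 + f p.2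
  have hinj : Function.Injective f := fun u v h => by
    have : (2 : ℤ) ^ (e u : ℕ) = 2 ^ (e v : ℕ) := by simpa [f] using h
    exact e.injective (Fin.ext (Nat.pow_right_injective le_rfl (by exact_mod_cast this)))
  have hmod : ∀ x ∈ L, x % 4 = 1 ∧ x ∈ Set.range f ∨ x % 4 = 2 := by
    intro x hx
    rcases mem_union.mp hx with hx | hx
    · obtain ⟨v, -, rfl⟩ := mem_image.mp hx
      exact .inl ⟨by simp only [f]; omega, v, rfl⟩
    · obtain ⟨p, -, rfl⟩ := mem_image.mp hx
      right; simp only [f]; omega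
  have hedge : ∀ u v, u ≠ v → f u + f v ∈ L → G.Adj u v := by
    intro u v huv hsum
    rcases mem_union.mp hsum with hs | hs
    · obtain ⟨w, -, hw⟩ := mem_image.mp hs
      simp only [f] at hw; omega
    obtain ⟨⟨p, q⟩, hpq, hs⟩ := mem_image.mp hs
    have hpq : G.Adj p q := by simpa using hpq
    have h2 : (2 : ℤ) ^ (e p : ℕ) + 2 ^ (e q : ℕ) = 2 ^ (e u : ℕ) + 2 ^ (e v : ℕ) := by
      simp only [f] at hs; omega
    have hne {x y : V} (h : x ≠ y) : (e x : ℕ) ≠ e y := fun h' => h (e.injective (Fin.ext h'))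
    rcases Nat.two_pow_add_two_pow_inj (hne hpq.ne) (hne huv) (by exact_mod_cast h2) with
      ⟨hpu, hqv⟩ | ⟨hpv, hqu⟩
    · rwa [← e.injective (Fin.ext hpu), ← e.injective (Fin.ext hqv)]
    · rw [← e.injective (Fin.ext hpv), ← e.injective (Fin.ext hqu)]
      exact hpq.symm
  refine ⟨L, ⟨f, hinj, fun v => mem_union_left _ (mem_image_of_mem f (mem_univ v)), ?_, ?_⟩, ?_⟩
  · intro u v
    refine ⟨fun h => ⟨hinj.ne h.ne, mem_union_right _ (mem_image.mpr ⟨(u, v), by simpa, rfl⟩)⟩,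
      fun ⟨hne, hsum⟩ => hedge u v (fun h => hne (congrArg f h)) hsum⟩
  · intro a ha hnot b hb _ hab
    have ha2 : a % 4 = 2 := (hmod a ha).resolve_left fun h => hnot h.2
    have hb12 := (hmod b hb).imp_left And.left
    have hab12 := (hmod (a + b) hab).imp_left And.left
    omega
  · rintro ⟨v⟩
    exact ⟨f v, mem_union_left _ (mem_image_of_mem f (mem_univ v))⟩

lemma exists_eq_intSumDiam {V : Type*} (G : SimpleGraph V)
    (h : ∃ L : Finset ℤ, IsSumLabeling G L ∧ L.Nonempty) :
    ∃ L : Finset ℤ, IsSumLabeling G L ∧ ∃ hL : L.Nonempty,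
      (intSumDiam G : ℤ) = L.max' hL - L.min' hL := by
  obtain ⟨L, hlab, hL⟩ := h
  have hne : {d | ∃ L : Finset ℤ, IsSumLabeling G L ∧
      ∃ hL : L.Nonempty, (L.max' hL - L.min' hL).toNat = d}.Nonempty := ⟨_, L, hlab, hL, rfl⟩
  obtain ⟨L', hlab', hL', hd⟩ := Nat.sInf_mem hne
  refine ⟨L', hlab', hL', ?_⟩
  rw [intSumDiam, ← hd, Int.toNat_of_nonneg (sub_nonneg.mpr (L'.min'_le_max' hL'))]

end SumLabeling

/-- For a graph `G` of order `n` with no isolated vertices and maximum degree `Δ`, one has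
`isd(G) ≥ 2n - Δ - 3`. -/
theorem stmt4 {V : Type*} [Fintype V] (G : SimpleGraph V) [DecidableRel G.Adj]
    (hiso : ∀ v : V, ∃ w : V, G.Adj v w) :
    2 * (Fintype.card V : ℤ) - (G.maxDegree : ℤ) - 3 ≤ (intSumDiam G : ℤ) := by
  rcases isEmpty_or_nonempty V with hV | hV
  · rw [Fintype.card_eq_zero]
    omega
  obtain ⟨L, hlab, hL⟩ := SumLabeling.exists_isSumLabeling G
  obtain ⟨L', hlab', hL', hd⟩ := SumLabeling.exists_eq_intSumDiam G ⟨L, hlab, hL hV⟩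
  exact hd ▸ SumLabeling.le_range_of_isSumLabeling G hiso hlab' hL'
end

section
/- Let G be a graph with n vertices (n ≥ 2). Then sd(G) ≤ 64n² - 64n + 9. More specifically, given a Sidon set {s₁ < ... < sₙ} ⊆ [1, 2p²] for a prime p with n ≤ p < 2n, the label set L consisting of the vertex labels 4sᵢ + 1 and, for each edge (i,j) of G, the edge label 4sᵢ + 4sⱼ + 2, induces G together with |E(G)| isolated vertices. -/
/-!
Label the vertices by `4 sᵢ + 1`, where `s` is a Sidon set, and each edge `uv` by the sum of
its endpoint labels. Vertex labels are `1 mod 4` and edge labels `2 mod 4`, so a sum of two labels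
lands in the set only if it is a sum of two vertex labels, and the Sidon property says which edge
it is. With the Erdős–Turán set `2 p i + (i² mod p)`, `i < n`, for a Bertrand prime `n < p ≤ 2n`,
all labels lie in `[1, 8 p (2n - 1) + 2]`.
-/

open Finset Function

def IsSidonMap {V α : Type*} [Add α] (f : V → α) : Prop :=
  ∀ u v u' v', f u + f v = f u' + f v' → (u = u' ∧ v = v') ∨ (u = v' ∧ v = u')

namespace IsSidonMap

variable {V W α : Type*} [Add α] {f : W → α}

theorem injective (hf : IsSidonMap f) : Injective f := fun u v h => by
  rcases hf u u v v (by rw [h]) with ⟨huv, -⟩ | ⟨huv, -⟩ <;> exact huv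

theorem comp (hf : IsSidonMap f) {e : V → W} (he : Injective e) : IsSidonMap (f ∘ e) :=
  fun u v u' v' h => by
    rcases hf _ _ _ _ h with ⟨h₁, h₂⟩ | ⟨h₁, h₂⟩
    · exact .inl ⟨he h₁, he h₂⟩
    · exact .inr ⟨he h₁, he h₂⟩

theorem four_mul_add_one {g : V → ℕ} (hg : IsSidonMap g) :
    IsSidonMap fun v => 4 * (g v : ℤ) + 1 :=
  fun u v u' v' h => hg u v u' v' (by simp only at h; omega)

end IsSidonMap

theorem Nat.eq_and_eq_of_mul_add_eq {m a b r s : ℕ} (hr : r < m) (hs : s < m)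
    (h : m * a + r = m * b + s) : a = b ∧ r = s := by
  have hm : 0 < m := by omega
  obtain ⟨ha, hr'⟩ := (Nat.div_mod_unique hm).2 ⟨add_comm r (m * a), hr⟩
  obtain ⟨hb, hs'⟩ := (Nat.div_mod_unique hm).2 ⟨add_comm s (m * b), hs⟩
  rw [h] at ha hr'
  exact ⟨ha.symm.trans hb, hr'.symm.trans hs'⟩

theorem eq_and_eq_or_eq_and_eq_of_add_eq_of_sq_add_sq_eq {R : Type*} [CommRing R] [IsDomain R]
    (h2 : (2 : R) ≠ 0) {a b c d : R} (hsum : a + b = c + d) (hsq : a ^ 2 + b ^ 2 = c ^ 2 + d ^ 2) :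
    (a = c ∧ b = d) ∨ (a = d ∧ b = c) := by
  have hprod : a * b = c * d :=
    mul_left_cancel₀ h2 (by linear_combination (a + b + c + d) * hsum - hsq)
  have hkey : (a - c) * (a - d) = 0 := by linear_combination a * hsum - hprod
  rcases mul_eq_zero.mp hkey with h | h
  · exact .inl ⟨sub_eq_zero.mp h, by linear_combination hsum - h⟩
  · exact .inr ⟨sub_eq_zero.mp h, by linear_combination hsum - h⟩

def erdosTuran (p i : ℕ) : ℕ := 2 * p * i + i ^ 2 % p

theorem erdosTuran_lt {p : ℕ} (hp : 0 < p) (i : ℕ) : erdosTuran p i < p * (2 * i + 1) := by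
  have := Nat.mod_lt (i ^ 2) hp
  unfold erdosTuran
  linarith

theorem isSidonMap_erdosTuran {p : ℕ} [Fact p.Prime] (hp2 : p ≠ 2) :
    IsSidonMap fun i : Fin p => erdosTuran p i := by
  have hp : 0 < p := Nat.Prime.pos Fact.out
  intro i j k l h
  obtain ⟨hsum, hsq⟩ : (i + j : ℕ) = k + l ∧
      (i : ℕ) ^ 2 % p + (j : ℕ) ^ 2 % p = (k : ℕ) ^ 2 % p + (l : ℕ) ^ 2 % p := by
    have := Nat.mod_lt ((i : ℕ) ^ 2) hp
    have := Nat.mod_lt ((j : ℕ) ^ 2) hp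
    have := Nat.mod_lt ((k : ℕ) ^ 2) hp
    have := Nat.mod_lt ((l : ℕ) ^ 2) hp
    refine Nat.eq_and_eq_of_mul_add_eq (m := 2 * p) (by omega) (by omega) ?_
    simp only [erdosTuran] at h
    linarith
  have hcast : ∀ a b : Fin p, ((a : ℕ) : ZMod p) = (b : ℕ) → a = b := fun a b hab => by
    simpa [ZMod.natCast_eq_natCast_iff', Nat.mod_eq_of_lt a.isLt, Nat.mod_eq_of_lt b.isLt,
      Fin.ext_iff] using hab
  have h2 : (2 : ZMod p) ≠ 0 := Ring.two_ne_zero (by rwa [ZMod.ringChar_zmod_n])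
  have hsum' : ((i : ℕ) : ZMod p) + (j : ℕ) = (k : ℕ) + (l : ℕ) := by
    exact_mod_cast congrArg (Nat.cast : ℕ → ZMod p) hsum
  have hsq' : ((i : ℕ) : ZMod p) ^ 2 + ((j : ℕ) : ZMod p) ^ 2 =
      ((k : ℕ) : ZMod p) ^ 2 + ((l : ℕ) : ZMod p) ^ 2 := by
    have := congrArg (Nat.cast : ℕ → ZMod p) hsq
    push_cast [ZMod.natCast_mod] at this
    exact this
  rcases eq_and_eq_or_eq_and_eq_of_add_eq_of_sq_add_sq_eq h2 hsum' hsq' with ⟨h₁, h₂⟩ | ⟨h₁, h₂⟩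
  · exact .inl ⟨hcast _ _ h₁, hcast _ _ h₂⟩
  · exact .inr ⟨hcast _ _ h₁, hcast _ _ h₂⟩

section SidonLabelSet

variable {V : Type*} [Fintype V] (G : SimpleGraph V) [DecidableRel G.Adj] (f : V → ℤ)

def sidonLabelSet : Finset ℤ :=
  univ.image f ∪ (univ.filter fun q : V × V => G.Adj q.1 q.2).image fun q => f q.1 + f q.2

variable {G f}

theorem mem_sidonLabelSet {a : ℤ} :
    a ∈ sidonLabelSet G f ↔ (∃ v, f v = a) ∨ ∃ u v, G.Adj u v ∧ f u + f v = a := by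
  simp [sidonLabelSet]

theorem isSumLabeling_sidonLabelSet (hf : IsSidonMap f) (hf4 : ∀ v, f v % 4 = 1) :
    IsSumLabeling G (sidonLabelSet G f) := by
  have hmod : ∀ a ∈ sidonLabelSet G f, a ∈ Set.range f ∨ a % 4 = 2 := fun a ha => by
    rcases mem_sidonLabelSet.1 ha with hv | ⟨u, v, -, rfl⟩
    · exact .inl hv
    · have := hf4 u; have := hf4 v; omega
  refine ⟨f, hf.injective, fun v => mem_sidonLabelSet.2 (.inl ⟨v, rfl⟩), fun u v => ?_, ?_⟩
  · refine ⟨fun h => ⟨fun h' => h.ne (hf.injective h'), mem_sidonLabelSet.2 (.inr ⟨u, v, h, rfl⟩)⟩,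
      fun ⟨_, h⟩ => ?_⟩
    rcases mem_sidonLabelSet.1 h with ⟨w, hw⟩ | ⟨a, b, hab, hsum⟩
    · have := hf4 u; have := hf4 v; have := hf4 w; omega
    · rcases hf a b u v hsum with ⟨rfl, rfl⟩ | ⟨rfl, rfl⟩
      exacts [hab, hab.symm]
  · intro a ha har b hb _ hab
    have ha2 := (hmod a ha).resolve_left har
    have hb4 : b % 4 = 1 ∨ b % 4 = 2 := by
      rcases hmod b hb with ⟨w, rfl⟩ | hb2
      exacts [.inl (hf4 w), .inr hb2]
    rcases hmod _ hab with ⟨w, hw⟩ | hab2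
    · have := hf4 w; omega
    · omega

theorem sidonLabelSet_bounds {a b : ℤ} (ha : 0 ≤ a) (hf : ∀ v, a ≤ f v ∧ f v ≤ b) :
    ∀ x ∈ sidonLabelSet G f, a ≤ x ∧ x ≤ 2 * b := fun x hx => by
  rcases mem_sidonLabelSet.1 hx with ⟨v, rfl⟩ | ⟨u, v, -, rfl⟩
  · have := hf v; omega
  · have := hf u; have := hf v; omega

end SidonLabelSet

theorem sumDiam_le_of_isSumLabeling {V : Type*} {G : SimpleGraph V} {L : Finset ℤ}
    (hG : IsSumLabeling G L) (hL : L.Nonempty) {a b : ℤ} (ha : 0 < a)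
    (hab : ∀ x ∈ L, a ≤ x ∧ x ≤ b) : sumDiam G ≤ (b - a).toNat :=
  calc sumDiam G ≤ (L.max' hL - L.min' hL).toNat :=
        Nat.sInf_le ⟨L, fun x hx => ha.trans_le (hab x hx).1, hG, hL, rfl⟩
    _ ≤ (b - a).toNat := Int.toNat_le_toNat <| sub_le_sub
        (L.max'_le hL b fun x hx => (hab x hx).2) (L.le_min' hL a fun x hx => (hab x hx).1)

theorem sumDiam_le_of_isSidonMap {V : Type*} [Fintype V] [Nonempty V] (G : SimpleGraph V)
    {g : V → ℕ} (hg : IsSidonMap g) {M : ℕ} (hM : ∀ v, g v ≤ M) : sumDiam G ≤ 8 * M + 1 := by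
  classical
  let f : V → ℤ := fun v => 4 * (g v : ℤ) + 1
  have hf : ∀ v, f v = 4 * (g v : ℤ) + 1 := fun _ => rfl
  have hG : IsSumLabeling G (sidonLabelSet G f) :=
    isSumLabeling_sidonLabelSet hg.four_mul_add_one fun v => by rw [hf]; omega
  have hL : (sidonLabelSet G f).Nonempty :=
    ⟨f (Classical.arbitrary V), mem_sidonLabelSet.2 (.inl ⟨_, rfl⟩)⟩
  have := sumDiam_le_of_isSumLabeling hG hL one_pos <|
    sidonLabelSet_bounds (b := 4 * M + 1) zero_le_one fun v => ⟨by rw [hf]; omega, by have := hM v; rw [hf]; omega⟩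
  omega

/-- For every graph `G` on `n ≥ 2` vertices, `sd(G) ≤ 64n² - 64n + 9`. -/
theorem stmt15 {V : Type*} [Fintype V] (G : SimpleGraph V) (hn : 2 ≤ Fintype.card V) :
    sumDiam G ≤ 64 * Fintype.card V ^ 2 - 64 * Fintype.card V + 9 := by
  set n := Fintype.card V
  obtain ⟨p, hp, hnp, hp2n⟩ := Nat.exists_prime_lt_and_le_two_mul n (by omega)
  have : Fact p.Prime := ⟨hp⟩
  have : Nonempty V := Fintype.card_pos_iff.mp (by omega)
  let e : V → Fin p := Fin.castLE hnp.le ∘ Fintype.equivFin V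
  have he : Injective e := (Fin.castLE_injective _).comp (Fintype.equivFin V).injective
  have hg : ∀ v, erdosTuran p (e v) ≤ p * (2 * n - 1) := fun v => by
    have := erdosTuran_lt hp.pos (e v)
    have : p * (2 * (e v : ℕ) + 1) ≤ p * (2 * n - 1) :=
      Nat.mul_le_mul_left p (by have := (Fintype.equivFin V v).isLt; simp [e]; omega)
    omega
  refine (sumDiam_le_of_isSidonMap G ((isSidonMap_erdosTuran (by omega)).comp he) hg).trans ?_
  have : p * (2 * n - 1) ≤ 2 * n * (2 * n - 1) := Nat.mul_le_mul_right _ hp2n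
  zify [show 64 * n ≤ 64 * n ^ 2 by nlinarith, show 1 ≤ 2 * n by omega] at this ⊢
  nlinarith
end

section
/- Let S = {s₁, ..., sₙ} be a Sidon set of positive integers and G a graph on vertex set {1, ..., n}. Let L = {4sᵢ + 1 : 1 ≤ i ≤ n} ∪ {4sᵢ + 4sⱼ + 2 : (i,j) ∈ E(G)}. Then the induced sum graph of L consists of a copy of G on the labels 4sᵢ + 1 (with 4sᵢ+1 adjacent to 4sⱼ+1 iff (i,j) ∈ E(G)) together with the edge labels as isolated vertices. -/
/-! Vertex labels `4sᵢ + 1` are `≡ 1 [ZMOD 4]` and edge labels `4sᵢ + 4sⱼ + 2` are `≡ 2`.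
Adding an edge label to any label gives a residue `3` or `0`, so edge labels are isolated; two
vertex labels sum to `4(sᵢ + sⱼ) + 2`, which is a label only if it is the label of an edge
`{k, l}` with `sᵢ + sⱼ = sₖ + sₗ`, and the Sidon property forces `{i, j} = {k, l}`. -/

section SidonSumLabels

variable {ι : Type*} [Fintype ι] (G : SimpleGraph ι) [DecidableRel G.Adj] (s : ι → ℤ)

def sidonSumLabels : Finset ℤ :=
  (Finset.univ.image fun i => 4 * s i + 1) ∪
    ((Finset.univ.filter fun p : ι × ι => G.Adj p.1 p.2).image
      fun p => 4 * s p.1 + 4 * s p.2 + 2)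

variable {G s}

theorem mem_sidonSumLabels {x : ℤ} :
    x ∈ sidonSumLabels G s ↔
      (∃ i, 4 * s i + 1 = x) ∨ ∃ i j, G.Adj i j ∧ 4 * s i + 4 * s j + 2 = x := by
  simp [sidonSumLabels]

theorem emod_four_of_mem_sidonSumLabels {x : ℤ} (hx : x ∈ sidonSumLabels G s) :
    x % 4 = 1 ∨ x % 4 = 2 := by
  rcases mem_sidonSumLabels.1 hx with ⟨i, rfl⟩ | ⟨i, j, -, rfl⟩ <;> omega

theorem emod_four_eq_two_of_mem_sidonSumLabels {a : ℤ} (ha : a ∈ sidonSumLabels G s)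
    (hnv : ∀ i, a ≠ 4 * s i + 1) : a % 4 = 2 := by
  rcases mem_sidonSumLabels.1 ha with ⟨i, rfl⟩ | ⟨i, j, -, rfl⟩
  · exact absurd rfl (hnv i)
  · omega

theorem add_notMem_sidonSumLabels_of_emod_four_eq_two {a b : ℤ} (ha : a % 4 = 2)
    (hb : b ∈ sidonSumLabels G s) : a + b ∉ sidonSumLabels G s := fun hab => by
  have := emod_four_of_mem_sidonSumLabels hb
  have := emod_four_of_mem_sidonSumLabels hab
  omega

theorem adj_iff_vertex_labels_add_mem_sidonSumLabels (hinj : Function.Injective s)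
    (hSidon : ∀ i j k l, s i + s j = s k + s l →
      (s i = s k ∧ s j = s l) ∨ (s i = s l ∧ s j = s k)) (i j : ι) :
    G.Adj i j ↔ i ≠ j ∧ (4 * s i + 1) + (4 * s j + 1) ∈ sidonSumLabels G s := by
  refine ⟨fun h => ⟨h.ne, mem_sidonSumLabels.2 (.inr ⟨i, j, h, by ring⟩)⟩, ?_⟩
  rintro ⟨-, hsum⟩
  rcases mem_sidonSumLabels.1 hsum with ⟨k, hk⟩ | ⟨k, l, hkl, hsum⟩
  · omega
  · rcases hSidon i j k l (by omega) with ⟨hik, hjl⟩ | ⟨hil, hjk⟩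
    · rwa [hinj hik, hinj hjl]
    · rw [hinj hil, hinj hjk]
      exact hkl.symm

end SidonSumLabels

theorem stmt16_general (n : ℕ) (G : SimpleGraph (Fin n)) [DecidableRel G.Adj]
    (s : Fin n → ℤ) (hinj : Function.Injective s)
    (hSidon : ∀ i j k l : Fin n, s i + s j = s k + s l →
      (s i = s k ∧ s j = s l) ∨ (s i = s l ∧ s j = s k)) :
    let L : Finset ℤ := (Finset.univ.image fun i => 4 * s i + 1) ∪
      (((Finset.univ : Finset (Fin n × Fin n)).filter (fun p => G.Adj p.1 p.2)).image
        (fun p => 4 * s p.1 + 4 * s p.2 + 2))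
    (∀ i j : Fin n, G.Adj i j ↔ (i ≠ j ∧ (4 * s i + 1) + (4 * s j + 1) ∈ L)) ∧
    (∀ a ∈ L, (∀ i, a ≠ 4 * s i + 1) → ∀ b ∈ L, b ≠ a → a + b ∉ L) :=
  ⟨adj_iff_vertex_labels_add_mem_sidonSumLabels hinj hSidon,
    fun _a ha hnv _b hb _ =>
      add_notMem_sidonSumLabels_of_emod_four_eq_two
        (emod_four_eq_two_of_mem_sidonSumLabels ha hnv) hb⟩

/-- Given a Sidon set `{s 1, ..., s n}` of positive integers and a graph `G` on `{1, ..., n}`,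
the label set `L = {4sᵢ + 1} ∪ {4sᵢ + 4sⱼ + 2 : (i,j) ∈ E(G)}` induces a copy of `G` on the
labels `4sᵢ + 1` together with the edge labels as isolated vertices. -/
theorem stmt16 (n : ℕ) (G : SimpleGraph (Fin n)) [DecidableRel G.Adj]
    (s : Fin n → ℤ) (hpos : ∀ i, 0 < s i) (hinj : Function.Injective s)
    (hSidon : ∀ i j k l : Fin n, s i + s j = s k + s l →
      (s i = s k ∧ s j = s l) ∨ (s i = s l ∧ s j = s k)) :
    let L : Finset ℤ := (Finset.univ.image fun i => 4 * s i + 1) ∪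
      (((Finset.univ : Finset (Fin n × Fin n)).filter (fun p => G.Adj p.1 p.2)).image
        (fun p => 4 * s p.1 + 4 * s p.2 + 2))
    (∀ i j : Fin n, G.Adj i j ↔ (i ≠ j ∧ (4 * s i + 1) + (4 * s j + 1) ∈ L)) ∧
    (∀ a ∈ L, (∀ i, a ≠ 4 * s i + 1) → ∀ b ∈ L, b ≠ a → a + b ∉ L) :=
  stmt16_general n G s hinj hSidon
end

section
/- Let G₁ and G₂ be graphs without isolated vertices, let L₁ and L₂ be optimal sum-graph labelings of G₁ and G₂ respectively (achieving range sd(Gᵢ)), and set L₂' = (4·sd(G₁) - 2)·L₂ (every label scaled by 4·sd(G₁)-2). Then L₁ ∪ L₂' induces the disjoint union G₁ ∪ G₂ plus isolated vertices, and consequently sd(G₁ ∪ G₂) ≤ 2(2·sd(G₁) - 1)(2·sd(G₂) - 1) - 1. -/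
/-! Labels of `L₁` lie in `(0, c/2]` and labels of `c • L₂` are positive multiples of `c`, so a
sum of two distinct labels of `L₁` stays below `c`, a mixed sum is not divisible by `c` and
exceeds `L₁`, and a sum of two labels of `c • L₂` lies in `c • L₂` exactly when the unscaled sum
lies in `L₂`. Hence the two labelings do not interact. For an optimal labeling `L` of a graph
with an edge, `2 min L < max L`, i.e. `max L ≤ 2 sd - 1`, which gives both the admissible
scale `c = 4 sd(G₁) - 2` and the bound on the range of the union. -/

namespace IsSumLabeling

variable {V V₁ V₂ : Type*} {G : SimpleGraph V} {G₁ : SimpleGraph V₁} {G₂ : SimpleGraph V₂}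
  {L L₁ L₂ : Finset ℤ}

theorem two_mul_min'_lt_max' (hs : IsSumLabeling G L) (hL : L.Nonempty) {v w : V}
    (hvw : G.Adj v w) : 2 * L.min' hL < L.max' hL := by
  obtain ⟨f, -, hmem, hadj, -⟩ := hs
  obtain ⟨hne, hsum⟩ := (hadj v w).1 hvw
  have hv := L.min'_le _ (hmem v)
  have hw := L.min'_le _ (hmem w)
  have hmax := L.le_max' _ hsum
  omega

section ScaledUnion

variable {c : ℤ} (h₁ : ∀ x ∈ L₁, 0 < x ∧ 2 * x ≤ c) (h₂ : ∀ y ∈ L₂, 0 < y)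
include h₁ h₂

theorem mul_notMem_left {y : ℤ} (hy : y ∈ L₂) : c * y ∉ L₁ := fun h => by
  have := h₁ _ h
  nlinarith [h₂ y hy]

theorem add_mem_union_image_mul_iff {x x' : ℤ} (hx : x ∈ L₁) (hx' : x' ∈ L₁) (hne : x ≠ x') :
    x + x' ∈ L₁ ∪ L₂.image (c * ·) ↔ x + x' ∈ L₁ := by
  refine ⟨fun h => ?_, Finset.mem_union_left _⟩
  obtain h | ⟨y, hy, hxy⟩ := Finset.mem_union.1 h |>.imp_right Finset.mem_image.1
  · exact h
  · have := h₁ x hx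
    have := h₁ x' hx'
    have : x + x' < c := by omega
    nlinarith [h₂ y hy]

theorem add_mul_notMem_union_image_mul {x y : ℤ} (hx : x ∈ L₁) (hy : y ∈ L₂) :
    x + c * y ∉ L₁ ∪ L₂.image (c * ·) := by
  obtain ⟨hx0, hxc⟩ := h₁ x hx
  rintro h
  obtain h | ⟨z, -, hz⟩ := Finset.mem_union.1 h |>.imp_right Finset.mem_image.1
  · have := h₁ _ h
    nlinarith [h₂ y hy]
  · -- `0 < x < c` cannot be the multiple `c * (z - y)` of `c`
    have hxz : x = c * (z - y) := by linarith
    rcases le_or_gt (z - y) 0 with hzy | hzy <;> nlinarith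

theorem mul_add_mul_mem_union_image_mul_iff (hc : 0 < c) {y y' : ℤ} (hy : y ∈ L₂)
    (hy' : y' ∈ L₂) :
    c * y + c * y' ∈ L₁ ∪ L₂.image (c * ·) ↔ y + y' ∈ L₂ := by
  rw [← mul_add, Finset.mem_union, Finset.mem_image]
  simp only [mul_right_inj' hc.ne', exists_eq_right]
  refine or_iff_right fun h => ?_
  have := h₁ _ h
  nlinarith [h₂ y hy, h₂ y' hy']

theorem sum_union_image_mul (hc : 0 < c) (hs₁ : IsSumLabeling G₁ L₁)
    (hs₂ : IsSumLabeling G₂ L₂) :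
    IsSumLabeling (G₁ ⊕g G₂) (L₁ ∪ L₂.image (c * ·)) := by
  obtain ⟨f₁, hinj₁, hmem₁, hadj₁, hiso₁⟩ := hs₁
  obtain ⟨f₂, hinj₂, hmem₂, hadj₂, hiso₂⟩ := hs₂
  have hcinj : Function.Injective (c * ·) := mul_right_injective₀ hc.ne'
  refine ⟨Sum.elim f₁ (c * f₂ ·), ?_, ?_, ?_, ?_⟩
  · rintro (u | u) (v | v) h
    · exact congrArg _ (hinj₁ h)
    · exact (mul_notMem_left h₁ h₂ (hmem₂ v) ((show f₁ u = c * f₂ v from h) ▸ hmem₁ u)).elim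
    · exact (mul_notMem_left h₁ h₂ (hmem₂ u) ((show c * f₂ u = f₁ v from h) ▸ hmem₁ v)).elim
    · exact congrArg _ (hinj₂ (hcinj h))
  · rintro (u | u)
    · exact Finset.mem_union_left _ (hmem₁ u)
    · exact Finset.mem_union_right _ (Finset.mem_image_of_mem _ (hmem₂ u))
  · rintro (u | u) (v | v)
    · simp only [SimpleGraph.sum_adj_inl, Sum.elim_inl, hadj₁]
      exact and_congr_right fun hne =>
        (add_mem_union_image_mul_iff h₁ h₂ (hmem₁ u) (hmem₁ v) hne).symm
    · exact iff_of_false (SimpleGraph.not_adj_sum_inl_inr _ _)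
        fun h => add_mul_notMem_union_image_mul h₁ h₂ (hmem₁ u) (hmem₂ v) h.2
    · refine iff_of_false (fun h => SimpleGraph.not_adj_sum_inl_inr _ _ h.symm) fun h => ?_
      rw [add_comm] at h
      exact add_mul_notMem_union_image_mul h₁ h₂ (hmem₁ v) (hmem₂ u) h.2
    · simp only [SimpleGraph.sum_adj_inr, Sum.elim_inr, hadj₂, hcinj.ne_iff,
        mul_add_mul_mem_union_image_mul_iff h₁ h₂ hc (hmem₂ u) (hmem₂ v)]
  · intro a ha hna b hb hba hab
    obtain ha | ⟨x, hx, rfl⟩ := Finset.mem_union.1 ha |>.imp_right Finset.mem_image.1 <;>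
      obtain hb | ⟨y, hy, rfl⟩ := Finset.mem_union.1 hb |>.imp_right Finset.mem_image.1
    · refine hiso₁ a ha (fun ⟨u, hu⟩ => hna ⟨.inl u, hu⟩) b hb hba ?_
      exact (add_mem_union_image_mul_iff h₁ h₂ ha hb hba.symm).1 hab
    · exact add_mul_notMem_union_image_mul h₁ h₂ ha hy hab
    · exact add_mul_notMem_union_image_mul h₁ h₂ hb hx (add_comm (c * x) b ▸ hab)
    · refine hiso₂ x hx (fun ⟨u, hu⟩ => hna ⟨.inr u, by simp [hu]⟩) y hy
        (fun h => hba (h ▸ rfl)) ?_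
      exact (mul_add_mul_mem_union_image_mul_iff h₁ h₂ hc hx hy).1 hab

end ScaledUnion

theorem le_two_mul_sumDiam_sub_one (hs : IsSumLabeling G L) (hL : L.Nonempty)
    (hopt : (L.max' hL - L.min' hL).toNat = sumDiam G) {v w : V} (hvw : G.Adj v w) {x : ℤ}
    (hx : x ∈ L) : x ≤ 2 * (sumDiam G : ℤ) - 1 := by
  have := hs.two_mul_min'_lt_max' hL hvw
  have := L.le_max' x hx
  omega

theorem sumDiam_le_of_forall_mem (hs : IsSumLabeling G L) (hL : L.Nonempty) {B : ℤ}
    (hB : ∀ x ∈ L, 1 ≤ x ∧ x ≤ B) : (sumDiam G : ℤ) ≤ B - 1 := by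
  have hle : sumDiam G ≤ (L.max' hL - L.min' hL).toNat :=
    Nat.sInf_le ⟨L, fun x hx => (hB x hx).1, hs, hL, rfl⟩
  have := (hB _ (L.min'_mem hL)).1
  have := (hB _ (L.max'_mem hL)).2
  have := L.min'_le _ (L.max'_mem hL)
  omega

end IsSumLabeling

open IsSumLabeling in
/-- If `L₁, L₂` are optimal sum-graph labelings of graphs `G₁, G₂` without isolated vertices,
then `L₁ ∪ (4·sd(G₁) - 2)·L₂` induces the disjoint union `G₁ ∪ G₂` plus isolated vertices, and
`sd(G₁ ∪ G₂) ≤ 2(2·sd(G₁) - 1)(2·sd(G₂) - 1) - 1`. -/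
theorem stmt18 {V₁ V₂ : Type*} [Nonempty V₁] [Nonempty V₂]
    (G₁ : SimpleGraph V₁) (G₂ : SimpleGraph V₂)
    (h₁ : ∀ v : V₁, ∃ w, G₁.Adj v w) (h₂ : ∀ v : V₂, ∃ w, G₂.Adj v w)
    (L₁ L₂ : Finset ℤ) (hL₁ : L₁.Nonempty) (hL₂ : L₂.Nonempty)
    (hp₁ : ∀ x ∈ L₁, 0 < x) (hp₂ : ∀ x ∈ L₂, 0 < x)
    (hs₁ : IsSumLabeling G₁ L₁) (hs₂ : IsSumLabeling G₂ L₂)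
    (ho₁ : (L₁.max' hL₁ - L₁.min' hL₁).toNat = sumDiam G₁)
    (ho₂ : (L₂.max' hL₂ - L₂.min' hL₂).toNat = sumDiam G₂) :
    IsSumLabeling (G₁ ⊕g G₂)
      (L₁ ∪ L₂.image (fun x => (4 * (sumDiam G₁ : ℤ) - 2) * x)) ∧
    (sumDiam (G₁ ⊕g G₂) : ℤ) ≤
      2 * (2 * (sumDiam G₁ : ℤ) - 1) * (2 * (sumDiam G₂ : ℤ) - 1) - 1 := by
  obtain ⟨v₁⟩ := ‹Nonempty V₁›
  obtain ⟨w₁, hvw₁⟩ := h₁ v₁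
  obtain ⟨v₂⟩ := ‹Nonempty V₂›
  obtain ⟨w₂, hvw₂⟩ := h₂ v₂
  have hb₁ {x} (hx : x ∈ L₁) := hs₁.le_two_mul_sumDiam_sub_one hL₁ ho₁ hvw₁ hx
  have hb₂ {y} (hy : y ∈ L₂) := hs₂.le_two_mul_sumDiam_sub_one hL₂ ho₂ hvw₂ hy
  have hd₂ : 1 ≤ (sumDiam G₂ : ℤ) := by
    obtain ⟨y, hy⟩ := hL₂
    linarith [hb₂ hy, hp₂ y hy]
  set c := 4 * (sumDiam G₁ : ℤ) - 2
  have hL₁c (x) (hx : x ∈ L₁) : 0 < x ∧ 2 * x ≤ c := ⟨hp₁ x hx, by linarith [hb₁ hx]⟩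
  have hc : 0 < c := by
    obtain ⟨x, hx⟩ := hL₁
    linarith [hL₁c x hx]
  have hU := sum_union_image_mul hL₁c hp₂ hc hs₁ hs₂
  refine ⟨hU, ?_⟩
  calc (sumDiam (G₁ ⊕g G₂) : ℤ) ≤ c * (2 * sumDiam G₂ - 1) - 1 := by
        refine hU.sumDiam_le_of_forall_mem (hL₁.mono Finset.subset_union_left) fun x hx => ?_
        obtain hx | ⟨y, hy, rfl⟩ := Finset.mem_union.1 hx |>.imp_right Finset.mem_image.1
        · have := hL₁c x hx
          constructor <;> nlinarith
        · have := hp₂ y hy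
          have := hb₂ hy
          constructor <;> nlinarith
    _ = _ := by ring
end

section
/- Let G be a k-uniform hypergraph (k ≥ 2) of order n without isolated vertices. Then the hypergraph sum-diameter satisfies sd(G) ≥ n + k(k-1)/2 - 1. -/
/-- `L` induces the `k`-uniform hypergraph with edge set `E` plus isolated vertices. -/
def IsKSumHyperLabeling {V : Type*} (k : ℕ) (E : Finset (Finset V)) (L : Finset ℤ) : Prop :=
  ∃ f : V → ℤ, Function.Injective f ∧ (∀ v, f v ∈ L) ∧
    (∀ A ∈ E, (A.image f).sum id ∈ L) ∧
    (∀ B : Finset ℤ, B ⊆ L → B.card = k → B.sum id ∈ L → ∃ A ∈ E, B = A.image f)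

/-- The sum-diameter of a `k`-uniform hypergraph with edge set `E`. -/
noncomputable def hyperSumDiam {V : Type*} (k : ℕ) (E : Finset (Finset V)) : ℕ :=
  sInf {d | ∃ L : Finset ℤ, (∀ x ∈ L, 0 < x) ∧ IsKSumHyperLabeling k E L ∧
    ∃ hL : L.Nonempty, (L.max' hL - L.min' hL).toNat = d}

/-!
If `w` carries the largest vertex label then `f w ≥ min L + n - 1`, and the label of an edge
through `w` lies in `L` and exceeds `f w` by a sum of `k - 1` distinct positive labels, which is at
least `1 + ⋯ + (k - 1) = k(k-1)/2`.

For the infimum defining the sum-diameter to be attained, some labeling has to exist. Label the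
vertices by `2H + 2^i` with `H = 2^n`: all vertex labels lie in `(2H, 3H]`, so a `k`-sum of vertex
labels is never a vertex label, a `k`-set containing an edge label overshoots every label, and
binary expansion recovers an edge from its sum.
-/

open Finset

theorem Finset.sum_id_image_of_injective {α : Type*} {f : α → ℤ} (hf : Function.Injective f)
    (A : Finset α) : (A.image f).sum id = ∑ a ∈ A, f a :=
  sum_image hf.injOn

theorem Finset.choose_two_card_add_one_le_sum {s : Finset ℤ} (hs : ∀ x ∈ s, 0 < x) :
    ((#s + 1).choose 2 : ℤ) ≤ ∑ x ∈ s, x := by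
  have gauss : ((#s + 1).choose 2 : ℤ) = ∑ n ∈ range #s, (1 + (n : ℤ)) := by
    rw [Nat.choose_two_right, ← sum_range_id, sum_range_succ']
    push_cast
    simp [add_comm]
  exact gauss ▸ sum_range_le_sum hs

theorem IsKSumHyperLabeling.card_sub_one_add_choose_two_le {V : Type*} [Fintype V] [Nonempty V]
    {k : ℕ} {E : Finset (Finset V)} (hcard : ∀ e ∈ E, #e = k) (hiso : ∀ v, ∃ e ∈ E, v ∈ e)
    {L : Finset ℤ} (hpos : ∀ x ∈ L, 0 < x) (hL : IsKSumHyperLabeling k E L) (hne : L.Nonempty) :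
    (Fintype.card V : ℤ) - 1 + k.choose 2 ≤ L.max' hne - L.min' hne := by
  classical
  obtain ⟨f, hf, hfL, hedge, -⟩ := hL
  obtain ⟨w, -, hw⟩ := exists_max_image univ f univ_nonempty
  obtain ⟨A, hA, hwA⟩ := hiso w
  have top_label : L.min' hne + Fintype.card V - 1 ≤ f w := by
    have hsub : univ.image f ⊆ Icc (L.min' hne) (f w) := by
      intro x hx
      obtain ⟨v, -, rfl⟩ := mem_image.1 hx
      exact mem_Icc.2 ⟨L.min'_le _ (hfL v), hw v (mem_univ v)⟩
    have := card_le_card hsub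
    rw [card_image_of_injective _ hf, card_univ, Int.card_Icc] at this
    have := Fintype.card_pos (α := V)
    omega
  have others_sum : (k.choose 2 : ℤ) ≤ ∑ v ∈ A.erase w, f v := by
    have h := choose_two_card_add_one_le_sum (s := (A.erase w).image f)
      fun x hx ↦ by obtain ⟨v, -, rfl⟩ := mem_image.1 hx; exact hpos _ (hfL v)
    rwa [card_image_of_injective _ hf, card_erase_add_one hwA, hcard A hA,
      sum_image hf.injOn] at h
  have edge_sum : ∑ v ∈ A, f v ≤ L.max' hne := by
    have := hedge A hA
    rw [sum_id_image_of_injective hf] at this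
    exact L.le_max' _ this
  rw [← add_sum_erase A f hwA] at edge_sum
  linarith

section Construction

variable {V : Type*} [Fintype V] {k : ℕ} {E : Finset (Finset V)}

def sumLabelSet (E : Finset (Finset V)) (f : V → ℤ) : Finset ℤ :=
  univ.image f ∪ E.image fun A ↦ ∑ v ∈ A, f v

theorem mem_sumLabelSet_bounds (hcard : ∀ e ∈ E, #e = k) (hk : 1 ≤ k) {f : V → ℤ} {lo hi : ℤ}
    (hlo : 0 ≤ lo) (hflo : ∀ v, lo ≤ f v) (hfhi : ∀ v, f v ≤ hi) {x : ℤ}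
    (hx : x ∈ sumLabelSet E f) : lo ≤ x ∧ x ≤ k * hi := by
  have hkZ : (1 : ℤ) ≤ k := by exact_mod_cast hk
  rcases mem_union.1 hx with hvertex | hedge
  · obtain ⟨v, -, rfl⟩ := mem_image.1 hvertex
    exact ⟨hflo v, by nlinarith [hflo v, hfhi v]⟩
  · obtain ⟨A, hA, rfl⟩ := mem_image.1 hedge
    have hlow := card_nsmul_le_sum A f lo fun v _ ↦ hflo v
    have hhigh := sum_le_card_nsmul A f hi fun v _ ↦ hfhi v
    rw [hcard A hA, nsmul_eq_mul] at hlow hhigh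
    exact ⟨by nlinarith, hhigh⟩

theorem isKSumHyperLabeling_sumLabelSet (hcard : ∀ e ∈ E, #e = k) {f : V → ℤ}
    (hf : Function.Injective f)
    (hsum : ∀ A B : Finset V, #A = k → #B = k → ∑ v ∈ A, f v = ∑ v ∈ B, f v → A = B)
    {lo hi : ℤ} (hlo : 0 ≤ lo) (hflo : ∀ v, lo ≤ f v) (hfhi : ∀ v, f v ≤ hi)
    (hsep₁ : hi < k * lo) (hsep₂ : k * hi < (2 * k - 1) * lo) :
    IsKSumHyperLabeling k E (sumLabelSet E f) := by
  have hk : 1 ≤ k := by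
    by_contra! h
    simp [Nat.lt_one_iff.1 h] at hsep₂
    linarith
  have bounds := fun x ↦ mem_sumLabelSet_bounds (x := x) hcard hk hlo hflo hfhi
  refine ⟨f, hf, fun v ↦ mem_union_left _ (mem_image_of_mem f (mem_univ v)), fun A hA ↦ ?_, ?_⟩
  · rw [sum_id_image_of_injective hf]
    exact mem_union_right _ (mem_image_of_mem _ hA)
  intro B hBL hBk hBsum
  have hB_vertices : B ⊆ univ.image f := by
    intro x hx
    by_contra hxv
    obtain ⟨A, hA, rfl⟩ := mem_image.1 ((mem_union.1 (hBL hx)).resolve_left hxv)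
    have hA_lo := card_nsmul_le_sum A f lo fun v _ ↦ hflo v
    have hrest := card_nsmul_le_sum (B.erase (∑ v ∈ A, f v)) id lo fun y hy ↦
      (bounds y (hBL (mem_of_mem_erase hy))).1
    rw [hcard A hA, nsmul_eq_mul] at hA_lo
    rw [card_erase_of_mem hx, hBk, nsmul_eq_mul, Nat.cast_sub hk, Nat.cast_one] at hrest
    have hsplit : ∑ v ∈ A, f v + (B.erase (∑ v ∈ A, f v)).sum id = B.sum id :=
      add_sum_erase B id hx
    have hB_hi := (bounds _ hBsum).2
    nlinarith
  obtain ⟨S, -, rfl⟩ := subset_image_iff.1 hB_vertices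
  rw [card_image_of_injective _ hf] at hBk
  rw [sum_id_image_of_injective hf] at hBsum
  have hS_lo := card_nsmul_le_sum S f lo fun v _ ↦ hflo v
  rw [hBk, nsmul_eq_mul] at hS_lo
  rcases mem_union.1 hBsum with hvertex | hedge
  · obtain ⟨v, -, hv⟩ := mem_image.1 hvertex
    linarith [hfhi v]
  · obtain ⟨A, hA, hAS⟩ := mem_image.1 hedge
    exact ⟨A, hA, by rw [hsum S A hBk (hcard A hA) hAS.symm]⟩

end Construction

theorem sum_two_pow_injective {α : Type*} {idx : α → ℕ} (h : Function.Injective idx) :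
    Function.Injective fun A : Finset α ↦ ∑ a ∈ A, (2 : ℤ) ^ idx a := by
  intro A B (hAB : ∑ a ∈ A, (2 : ℤ) ^ idx a = ∑ a ∈ B, (2 : ℤ) ^ idx a)
  have : ∑ i ∈ A.image idx, 2 ^ i = ∑ i ∈ B.image idx, 2 ^ i := by
    rw [sum_image h.injOn, sum_image h.injOn]
    exact_mod_cast hAB
  exact image_injective h (geomSum_injective le_rfl this)

theorem exists_pos_isKSumHyperLabeling {V : Type*} [Fintype V] [Nonempty V] {k : ℕ} (hk : 2 ≤ k)
    {E : Finset (Finset V)} (hcard : ∀ e ∈ E, #e = k) :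
    ∃ L : Finset ℤ, (∀ x ∈ L, 0 < x) ∧ IsKSumHyperLabeling k E L ∧ L.Nonempty := by
  set H : ℤ := 2 ^ Fintype.card V
  set idx : V → ℕ := fun v ↦ Fintype.equivFin V v
  have hidx : Function.Injective idx := Fin.val_injective.comp (Fintype.equivFin V).injective
  have hpow_lo (v : V) : (1 : ℤ) ≤ 2 ^ idx v := one_le_pow₀ (by norm_num)
  have hpow_hi (v : V) : (2 : ℤ) ^ idx v ≤ H := pow_le_pow_right₀ (by norm_num) (Fin.is_lt _).le
  set f : V → ℤ := fun v ↦ 2 * H + 2 ^ idx v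
  have hf : Function.Injective f := fun a b hab ↦
    hidx (Nat.pow_right_injective le_rfl (by exact_mod_cast add_left_cancel hab))
  have hsum (A B : Finset V) (hA : #A = k) (hB : #B = k)
      (hAB : ∑ v ∈ A, f v = ∑ v ∈ B, f v) : A = B := by
    simp only [f, sum_add_distrib, sum_const, hA, hB] at hAB
    exact sum_two_pow_injective hidx (add_left_cancel hAB)
  have hH : 0 < H := by positivity
  have hkZ : (2 : ℤ) ≤ k := by exact_mod_cast hk
  have hflo (v : V) : 2 * H + 1 ≤ f v := by linarith [hpow_lo v]
  have hfhi (v : V) : f v ≤ 3 * H := by linarith [hpow_hi v]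
  refine ⟨sumLabelSet E f, fun x hx ↦ ?_, isKSumHyperLabeling_sumLabelSet hcard hf hsum
    (by positivity) hflo hfhi (by nlinarith) (by nlinarith), ⟨f (Classical.arbitrary V), ?_⟩⟩
  · linarith [(mem_sumLabelSet_bounds hcard (by omega) (by positivity) hflo hfhi hx).1]
  · exact mem_union_left _ (mem_image_of_mem f (mem_univ _))

/-- For a `k`-uniform hypergraph (`k ≥ 2`) of order `n` without isolated vertices,
`sd(G) ≥ n + k(k-1)/2 - 1`. -/
theorem stmt19 {V : Type*} [Fintype V] [Nonempty V] (k : ℕ) (hk : 2 ≤ k)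
    (E : Finset (Finset V)) (hcard : ∀ e ∈ E, e.card = k)
    (hiso : ∀ v : V, ∃ e ∈ E, v ∈ e) :
    Fintype.card V + k * (k - 1) / 2 - 1 ≤ hyperSumDiam k E := by
  obtain ⟨L₀, hpos₀, hL₀, hne₀⟩ := exists_pos_isKSumHyperLabeling hk hcard
  refine le_csInf ⟨_, L₀, hpos₀, hL₀, hne₀, rfl⟩ ?_
  rintro d ⟨L, hpos, hL, hne, rfl⟩
  have := hL.card_sub_one_add_choose_two_le hcard hiso hpos hne
  rw [← Nat.choose_two_right]
  omega
end
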